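/- For every integer m = 4m₀ with m₀ ≥ 1, the labeling ℓ of W(m) defined by {ℓ(x_i), ℓ(y_i)} = {2i-2m+1, 2m-2i-1} for all i ∈ {0,...,m-1} (with ℓ(x_i) = 2i-2m+1) is a distance magic labeling of W(m). -/

import Mathlib

open Finset

/-- The label set `I_n = {1-n, 3-n, ..., n-1}`. -/
def ISet (n : ℕ) : Finset ℤ := (Finset.range n).image (fun i : ℕ => 2 * (i : ℤ) + 1 - n)

open scoped Classical in
/-- Sum of the labels over the neighborhood of `w`. -/
noncomputable def nbrSum {V : Type*} [Fintype V] (G : SimpleGraph V) (ℓ : V → ℤ) (w : V) : ℤ :=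
  ∑ x ∈ Finset.univ.filter (fun x => G.Adj w x), ℓ x

open scoped Classical in
/-- The degree of a vertex. -/
noncomputable def gdeg {V : Type*} [Fintype V] (G : SimpleGraph V) (w : V) : ℕ :=
  (Finset.univ.filter (fun x => G.Adj w x)).card

/-- A distance magic labeling: a bijection onto `I_n` with all neighborhood sums `0`. -/
def IsDML {V : Type*} [Fintype V] (G : SimpleGraph V) (ℓ : V → ℤ) : Prop :=
  Function.Injective ℓ ∧ (∀ x, ℓ x ∈ ISet (Fintype.card V)) ∧
    (∀ i ∈ ISet (Fintype.card V), ∃ x, ℓ x = i) ∧ ∀ w, nbrSum G ℓ w = 0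

/-- The wreath graph `W(m)`: vertices `(i, b)` with `b = false` for `x_i` and `b = true` for
`y_i`; each of `x_i, y_i` is adjacent to each of `x_{i±1}, y_{i±1}` (indices mod `m`). -/
def wreath (m : ℕ) : SimpleGraph (ZMod m × Bool) where
  Adj p q := p ≠ q ∧ (p.1 = q.1 + 1 ∨ q.1 = p.1 + 1)
  symm := ⟨fun p q h => ⟨h.1.symm, h.2.symm⟩⟩
  loopless := ⟨fun p h => h.1 rfl⟩

/-!
Since `ℓ(y_i) = -ℓ(x_i)` and every neighbourhood in `W(m)` is a union of pairs `{x_j, y_j}`,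
all neighbourhood sums vanish. The labels of the `x_i` are the negative elements of `I_{2m}`,
those of the `y_i` the positive ones, so `ℓ` is a bijection onto `I_{2m}`.
-/

theorem two_mul_add_one_sub_mem_ISet {n k : ℕ} (hk : k < n) : 2 * (k : ℤ) + 1 - n ∈ ISet n :=
  mem_image.2 ⟨k, mem_range.2 hk, rfl⟩

theorem neg_mem_ISet {n : ℕ} {z : ℤ} (hz : z ∈ ISet n) : -z ∈ ISet n := by
  obtain ⟨k, hk, rfl⟩ := mem_image.1 hz
  rw [mem_range] at hk
  convert two_mul_add_one_sub_mem_ISet (by omega : n - 1 - k < n) using 1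
  omega

theorem nbrSum_eq_zero_of_involutive {V : Type*} [Fintype V] (G : SimpleGraph V) (ℓ : V → ℤ)
    {σ : V → V} (hσ : Function.Involutive σ) (hG : ∀ w x, G.Adj w (σ x) ↔ G.Adj w x)
    (hℓ : ∀ x, ℓ (σ x) = -ℓ x) (w : V) : nbrSum G ℓ w = 0 := by
  refine sum_involution (fun x _ => σ x) (fun x _ => by simp [hℓ]) (fun x _ hx hfix => ?_)
    (fun x hx => by simpa [hG] using hx) (fun x _ => hσ x)
  have hx_neg := hℓ x
  rw [hfix] at hx_neg
  exact hx (by omega)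

theorem wreath_adj_iff {m : ℕ} (hm : m ≠ 1) {p q : ZMod m × Bool} :
    (wreath m).Adj p q ↔ p.1 = q.1 + 1 ∨ q.1 = p.1 + 1 := by
  have := ZMod.nontrivial_iff.2 hm
  refine ⟨And.right, fun h => ⟨fun hpq => one_ne_zero (α := ZMod m) ?_, h⟩⟩
  rw [hpq] at h
  rcases h with h | h <;> linear_combination -h

def wreathLabel (m : ℕ) (p : ZMod m × Bool) : ℤ :=
  if p.2 then 2 * (m : ℤ) - 2 * (p.1.val : ℤ) - 1 else 2 * (p.1.val : ℤ) - 2 * (m : ℤ) + 1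

variable {m : ℕ}

theorem wreathLabel_false (i : ZMod m) :
    wreathLabel m (i, false) = 2 * (i.val : ℤ) + 1 - (2 * m : ℕ) := by
  simp only [wreathLabel]
  push_cast
  ring

theorem wreathLabel_true (i : ZMod m) : wreathLabel m (i, true) = -wreathLabel m (i, false) := by
  simp only [wreathLabel, if_true, Bool.false_eq_true, if_false]
  ring

theorem wreathLabel_not (p : ZMod m × Bool) :
    wreathLabel m (p.1, !p.2) = -wreathLabel m p := by
  rcases p with ⟨i, _ | _⟩
  · exact wreathLabel_true i
  · rw [Bool.not_true, wreathLabel_true, neg_neg]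

theorem wreathLabel_injective [NeZero m] : Function.Injective (wreathLabel m) := by
  rintro ⟨i, b⟩ ⟨j, c⟩ h
  have hi := ZMod.val_lt i
  have hj := ZMod.val_lt j
  cases b <;> cases c <;> simp only [wreathLabel_true, wreathLabel_false] at h <;> push_cast at h
  · rw [ZMod.val_injective m (by omega : i.val = j.val)]
  · omega
  · omega
  · rw [ZMod.val_injective m (by omega : i.val = j.val)]

theorem wreathLabel_mem_ISet [NeZero m] (p : ZMod m × Bool) :
    wreathLabel m p ∈ ISet (2 * m) := by
  have hlabel : wreathLabel m (p.1, false) ∈ ISet (2 * m) := by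
    rw [wreathLabel_false]
    exact two_mul_add_one_sub_mem_ISet (by have := ZMod.val_lt p.1; omega)
  rcases p with ⟨i, _ | _⟩
  · exact hlabel
  · exact wreathLabel_true i ▸ neg_mem_ISet hlabel

theorem exists_wreathLabel_eq [NeZero m] {z : ℤ} (hz : z ∈ ISet (2 * m)) :
    ∃ p, wreathLabel m p = z := by
  obtain ⟨k, hk, rfl⟩ := mem_image.1 hz
  rw [mem_range] at hk
  by_cases hkm : k < m
  · exact ⟨((k : ZMod m), false), by rw [wreathLabel_false, ZMod.val_natCast_of_lt hkm]⟩
  · refine ⟨(((2 * m - 1 - k : ℕ) : ZMod m), true), ?_⟩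
    rw [wreathLabel_true, wreathLabel_false, ZMod.val_natCast_of_lt (by omega)]
    omega

theorem wreathLabel_isDML [NeZero m] (hm : m ≠ 1) : IsDML (wreath m) (wreathLabel m) := by
  have hcard : Fintype.card (ZMod m × Bool) = 2 * m := by
    rw [Fintype.card_prod, ZMod.card, Fintype.card_bool, mul_comm]
  refine ⟨wreathLabel_injective, ?_, ?_, ?_⟩
  · exact hcard ▸ wreathLabel_mem_ISet
  · exact hcard ▸ fun z => exists_wreathLabel_eq
  · exact nbrSum_eq_zero_of_involutive _ _ (σ := fun p => (p.1, !p.2))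
      (fun p => by simp) (fun w x => by simp [wreath_adj_iff hm]) wreathLabel_not

theorem wreath_four_dvd_labeling_general (m m₀ : ℕ) [NeZero m] (hm : m = 4 * m₀)
    (ℓ : ZMod m × Bool → ℤ)
    (hl : ∀ p : ZMod m × Bool,
      ℓ p = if p.2 then 2 * (m : ℤ) - 2 * (p.1.val : ℤ) - 1
            else 2 * (p.1.val : ℤ) - 2 * (m : ℤ) + 1) :
    IsDML (wreath m) ℓ := by
  obtain rfl : ℓ = wreathLabel m := funext hl
  exact wreathLabel_isDML (by have := NeZero.ne m; omega)

/-- For `m = 4m₀` with `m₀ ≥ 1`, the labeling `ℓ(x_i) = 2i - 2m + 1`, `ℓ(y_i) = 2m - 2i - 1`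
is a distance magic labeling of the wreath graph `W(m)`. -/
theorem wreath_four_dvd_labeling (m m₀ : ℕ) [NeZero m] (hm₀ : 1 ≤ m₀) (hm : m = 4 * m₀)
    (ℓ : ZMod m × Bool → ℤ)
    (hl : ∀ p : ZMod m × Bool,
      ℓ p = if p.2 then 2 * (m : ℤ) - 2 * (p.1.val : ℤ) - 1
            else 2 * (p.1.val : ℤ) - 2 * (m : ℤ) + 1) :
    IsDML (wreath m) ℓ :=
  wreath_four_dvd_labeling_general m m₀ hm ℓ hl
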